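/- arXiv:1512.05230 — 5 statements merged into one kernel-verified Lean document; each statement's English description precedes it below -/
import Mathlib

section
/- Let a, b, c > 0 and α, β, γ ∈ (0,π) be real numbers. Then the three equations a·cos β + b·cos α − c = 0, b·sin α − a·sin β = 0 and α + β + γ − π = 0 hold if and only if there exist affinely independent points A, B, C in the euclidean plane ℝ² with dist(B,C) = a, dist(C,A) = b, dist(A,B) = c, and undirected angles ∠BAC = α, ∠ABC = β, ∠ACB = γ (i.e. a, b, c are the edgelengths of a nondegenerate euclidean triangle with respectively opposite angles α, β, γ). -/
open Real EuclideanGeometry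

/-!
Any triangle satisfies the three equations: the first is the projection formula (sum of the
law of cosines at `A` and at `B`), the second the law of sines and the third the angle sum.
Conversely, given a solution, build the triangle with sides `b, c` enclosing the angle `α` at
`A`. Its side `a'` and angle `β'` at `B` then satisfy `a' cos β' = a cos β` and
`a' sin β' = a sin β` by the first two equations, and polar coordinates with angle in `[0, π]`
are unique, so `a' = a` and `β' = β`; the angle sum gives the angle at `C`.
-/

/-- The equation `g_Δ (a, b, c, α, β, γ) = 0`. -/
def TriangleEquations (a b c α β γ : ℝ) : Prop :=
  a * cos β + b * cos α - c = 0 ∧ b * sin α - a * sin β = 0 ∧ α + β + γ - π = 0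

theorem Real.eq_and_eq_of_mul_cos_eq_of_mul_sin_eq {r s θ φ : ℝ} (hr : 0 < r) (hs : 0 ≤ s)
    (hθ : θ ∈ Set.Icc 0 π) (hφ : φ ∈ Set.Icc 0 π) (hcos : r * cos θ = s * cos φ)
    (hsin : r * sin θ = s * sin φ) : r = s ∧ θ = φ := by
  have hrs : r ^ 2 = s ^ 2 := by
    linear_combination (r * sin θ + s * sin φ) * hsin + (r * cos θ + s * cos φ) * hcos
      - r ^ 2 * sin_sq_add_cos_sq θ + s ^ 2 * sin_sq_add_cos_sq φ
  obtain rfl := (sq_eq_sq₀ hr.le hs).1 hrs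
  exact ⟨rfl, injOn_cos hθ hφ (mul_left_cancel₀ hr.ne' hcos)⟩

section EuclideanSpace

variable {V P : Type*} [NormedAddCommGroup V] [InnerProductSpace ℝ V] [MetricSpace P]
  [NormedAddTorsor V P]

theorem EuclideanGeometry.dist_eq_dist_mul_cos_angle_add_dist_mul_cos_angle (A B C : P) :
    dist A B = dist B C * cos (∠ A B C) + dist C A * cos (∠ B A C) := by
  rcases eq_or_ne A B with rfl | hAB
  · simp -- the junk angle `∠ A A C = π / 2` has cosine `0`
  have hα := law_cos B A C
  have hβ := law_cos A B C
  rw [dist_comm B A, dist_comm C B, dist_comm A C] at *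
  apply mul_left_cancel₀ (dist_pos.2 hAB).ne'
  linear_combination -(hα + hβ) / 2

theorem EuclideanGeometry.triangleEquations_of_ne {A B C : P} (hAB : A ≠ B) :
    TriangleEquations (dist B C) (dist C A) (dist A B) (∠ B A C) (∠ A B C) (∠ A C B) := by
  have hsin := law_sin A B C
  have hsum := angle_add_angle_add_angle_eq_pi C hAB.symm
  rw [angle_comm C A B] at hsin hsum
  rw [angle_comm B C A] at hsum
  refine ⟨?_, by linarith, by linarith⟩
  rw [dist_eq_dist_mul_cos_angle_add_dist_mul_cos_angle A B C, sub_self]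

theorem EuclideanGeometry.affineIndependent_of_angle_mem_Ioo {A B C : P} (hBA : B ≠ A)
    (hCA : C ≠ A) (h : ∠ B A C ∈ Set.Ioo 0 π) : AffineIndependent ℝ ![A, B, C] := by
  rw [affineIndependent_iff_not_collinear_set, Set.insert_comm,
    collinear_iff_eq_or_eq_or_angle_eq_zero_or_angle_eq_pi]
  rintro (hAB | hAC | h0 | hπ)
  · exact hBA hAB
  · exact hCA hAC
  · exact h.1.ne' h0
  · exact h.2.ne hπ

end EuclideanSpace

theorem EuclideanSpace.exists_dist_eq_dist_eq_angle_eq {b c α : ℝ} (hb : 0 < b) (hc : 0 < c)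
    (hα : α ∈ Set.Icc 0 π) :
    ∃ A B C : EuclideanSpace ℝ (Fin 2), dist A B = c ∧ dist C A = b ∧ ∠ B A C = α := by
  have hB : ‖!₂[c, 0]‖ = c := by simp [EuclideanSpace.norm_eq, hc.le]
  have hC : ‖!₂[b * cos α, b * sin α]‖ = b := by
    simp [EuclideanSpace.norm_eq, Fin.sum_univ_two, mul_pow, ← mul_add, hb.le]
  refine ⟨0, !₂[c, 0], !₂[b * cos α, b * sin α], by rwa [dist_zero_left],
    by rwa [dist_zero_right], ?_⟩
  rw [EuclideanGeometry.angle, vsub_eq_sub, vsub_eq_sub, sub_zero, sub_zero,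
    InnerProductGeometry.angle, hB, hC]
  convert arccos_cos hα.1 hα.2 using 2
  simp [PiLp.inner_apply]
  field_simp

theorem stmt_0_general (a b c α β γ : ℝ) (ha : 0 < a) (hb : 0 < b) (hc : 0 < c)
    (hα : α ∈ Set.Ioo 0 π) (hβ : β ∈ Set.Ioo 0 π) :
    (a * Real.cos β + b * Real.cos α - c = 0 ∧
      b * Real.sin α - a * Real.sin β = 0 ∧
      α + β + γ - π = 0) ↔
    ∃ A B C : EuclideanSpace ℝ (Fin 2), AffineIndependent ℝ ![A, B, C] ∧
      dist B C = a ∧ dist C A = b ∧ dist A B = c ∧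
      ∠ B A C = α ∧ ∠ A B C = β ∧ ∠ A C B = γ := by
  constructor
  · rintro ⟨hcos, hsin, hsum⟩
    obtain ⟨A, B, C, hAB, hCA, hBAC⟩ :=
      EuclideanSpace.exists_dist_eq_dist_eq_angle_eq hb hc (Set.Ioo_subset_Icc_self hα)
    have hA : A ≠ B := dist_pos.1 (hAB ▸ hc)
    obtain ⟨hcos', hsin', hsum'⟩ := triangleEquations_of_ne (C := C) hA
    simp only [hAB, hCA, hBAC] at hcos' hsin' hsum'
    obtain ⟨rfl, rfl⟩ := eq_and_eq_of_mul_cos_eq_of_mul_sin_eq ha dist_nonneg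
      (Set.Ioo_subset_Icc_self hβ) ⟨angle_nonneg A B C, angle_le_pi A B C⟩
      (by linarith) (by linarith)
    refine ⟨A, B, C, affineIndependent_of_angle_mem_Ioo hA.symm (dist_pos.1 (hCA ▸ hb))
      (hBAC ▸ hα), rfl, hCA, hAB, hBAC, rfl, by linarith⟩
  · rintro ⟨A, B, C, hABC, rfl, rfl, rfl, rfl, rfl, rfl⟩
    exact triangleEquations_of_ne (hABC.injective.ne (by decide : (0 : Fin 3) ≠ 1))

/-- For `a, b, c > 0` and `α, β, γ ∈ (0, π)`, the three equations
`a·cos β + b·cos α − c = 0`, `b·sin α − a·sin β = 0` and `α + β + γ − π = 0` hold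
if and only if `a`, `b`, `c` are the edgelengths of a nondegenerate euclidean triangle
with respectively opposite angles `α`, `β`, `γ`. -/
theorem stmt_0 (a b c α β γ : ℝ) (ha : 0 < a) (hb : 0 < b) (hc : 0 < c)
    (hα : α ∈ Set.Ioo 0 π) (hβ : β ∈ Set.Ioo 0 π) (hγ : γ ∈ Set.Ioo 0 π) :
    (a * Real.cos β + b * Real.cos α - c = 0 ∧
      b * Real.sin α - a * Real.sin β = 0 ∧
      α + β + γ - π = 0) ↔
    ∃ A B C : EuclideanSpace ℝ (Fin 2), AffineIndependent ℝ ![A, B, C] ∧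
      dist B C = a ∧ dist C A = b ∧ dist A B = c ∧
      ∠ B A C = α ∧ ∠ A B C = β ∧ ∠ A C B = γ :=
  stmt_0_general a b c α β γ ha hb hc hα hβ
end

section
/- At every point x of the open set U_Δ = {(a,b,c,α,β,γ) ∈ ℝ⁶ : a>0, b>0, c>0, α,β,γ ∈ (0,π)}, the Fréchet derivative of the map g_Δ : ℝ⁶ → ℝ³ is surjective (i.e. has full rank 3); in particular 0 is a regular value of the restriction of g_Δ to U_Δ. -/
open Real

noncomputable def gDelta (x : Fin 6 → ℝ) : Fin 3 → ℝ :=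
  ![x 0 * Real.cos (x 4) + x 1 * Real.cos (x 3) - x 2,
    x 1 * Real.sin (x 3) - x 0 * Real.sin (x 4),
    x 3 + x 4 + x 5 - π]

noncomputable def pr (i : Fin 6) : (Fin 6 → ℝ) →L[ℝ] ℝ := ContinuousLinearMap.proj i

noncomputable def Lmap (x : Fin 6 → ℝ) : (Fin 6 → ℝ) →L[ℝ] (Fin 3 → ℝ) :=
  ContinuousLinearMap.pi
    ![Real.cos (x 4) • pr 0 + (-(x 0 * Real.sin (x 4))) • pr 4
        + Real.cos (x 3) • pr 1 + (-(x 1 * Real.sin (x 3))) • pr 3 - pr 2,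
      Real.sin (x 3) • pr 1 + (x 1 * Real.cos (x 3)) • pr 3
        - (Real.sin (x 4) • pr 0 + (x 0 * Real.cos (x 4)) • pr 4),
      pr 3 + pr 4 + pr 5]

set_option maxHeartbeats 2000000 in
theorem hasF (x : Fin 6 → ℝ) : HasFDerivAt gDelta (Lmap x) x := by
  apply hasFDerivAt_pi''
  intro i
  fin_cases i
  · have h := (((hasFDerivAt_apply 0 x).mul ((hasFDerivAt_apply 4 x).cos)).add
      ((hasFDerivAt_apply 1 x).mul ((hasFDerivAt_apply 3 x).cos))).sub (hasFDerivAt_apply 2 x)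
    refine HasFDerivAt.congr_fderiv h ?_
    ext v
    simp [Lmap, pr, ContinuousLinearMap.proj]
    ring
  · have h := ((hasFDerivAt_apply 1 x).mul ((hasFDerivAt_apply 3 x).sin)).sub
      ((hasFDerivAt_apply 0 x).mul ((hasFDerivAt_apply 4 x).sin))
    refine HasFDerivAt.congr_fderiv h ?_
    ext v
    simp [Lmap, pr, ContinuousLinearMap.proj]
    ring
  · have h3 : HasFDerivAt (fun f : Fin 6 → ℝ => f 3) (pr 3) x := hasFDerivAt_apply 3 x
    have h4 : HasFDerivAt (fun f : Fin 6 → ℝ => f 4) (pr 4) x := hasFDerivAt_apply 4 x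
    have h5 : HasFDerivAt (fun f : Fin 6 → ℝ => f 5) (pr 5) x := hasFDerivAt_apply 5 x
    have h := ((h3.add h4).add h5).sub_const π
    refine HasFDerivAt.congr_fderiv h ?_
    ext v
    simp [Lmap, pr, ContinuousLinearMap.proj]

/-- at every point of `U_Δ = {a,b,c > 0, α,β,γ ∈ (0,π)}` the Fréchet
derivative of `g_Δ` is surjective (full rank 3); in particular `0` is a regular value
of the restriction of `g_Δ` to `U_Δ`. -/
theorem stmt_1 (x : Fin 6 → ℝ)
    (hx : 0 < x 0 ∧ 0 < x 1 ∧ 0 < x 2 ∧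
      x 3 ∈ Set.Ioo 0 π ∧ x 4 ∈ Set.Ioo 0 π ∧ x 5 ∈ Set.Ioo 0 π) :
    Function.Surjective ⇑(fderiv ℝ gDelta x) := by
  rw [(hasF x).fderiv]
  intro y
  have hs : Real.sin (x 3) ≠ 0 :=
    ne_of_gt (Real.sin_pos_of_pos_of_lt_pi hx.2.2.2.1.1 hx.2.2.2.1.2)
  refine ⟨![0, y 1 / Real.sin (x 3),
      (y 1 / Real.sin (x 3)) * Real.cos (x 3) - y 0, 0, 0, y 2], ?_⟩
  have h5 : (![0, y 1 / Real.sin (x 3),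
      (y 1 / Real.sin (x 3)) * Real.cos (x 3) - y 0, 0, 0, y 2] : Fin 6 → ℝ) 5 = y 2 := rfl
  funext i
  fin_cases i <;>
    · simp [Lmap, pr, ContinuousLinearMap.proj, h5]
      try field_simp
      try ring
end

section
/- Let u, v, w be linearly independent unit vectors in EuclideanSpace ℝ (Fin 3), and set a = angle(v,w), b = angle(w,u), c = angle(u,v) and α = angle(v − ⟨v,u⟩u, w − ⟨w,u⟩u) (the spherical vertex angle at u). Then the spherical law of cosines holds: cos a = cos b · cos c + sin b · sin c · cos α. (By symmetry the analogous identities hold at the vertices v and w.) -/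
open Real InnerProductGeometry

/-! Projecting `v` and `w` onto the orthogonal complement of the unit vector `u` gives vectors of
lengths `sin c` and `sin b` whose inner product is `⟪v, w⟫ - ⟪v, u⟫⟪w, u⟫ = cos a - cos b cos c`. -/

namespace InnerProductGeometry

variable {V : Type*} [NormedAddCommGroup V] [InnerProductSpace ℝ V]

lemma inner_sub_inner_smul_sub_inner_smul {u : V} (hu : ‖u‖ = 1) (v w : V) :
    inner ℝ (v - inner ℝ v u • u) (w - inner ℝ w u • u) =
      inner ℝ v w - inner ℝ v u * inner ℝ w u := by
  simp only [inner_sub_left, inner_sub_right, real_inner_smul_left, real_inner_smul_right,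
    real_inner_self_eq_norm_sq, hu, real_inner_comm u w]
  ring

lemma norm_sub_inner_smul_eq_sin_angle_mul_norm {u : V} (hu : ‖u‖ = 1) (v : V) :
    ‖v - inner ℝ v u • u‖ = sin (angle u v) * ‖v‖ := by
  have h := sin_angle_mul_norm_mul_norm u v
  rw [hu, one_mul] at h
  rw [h, norm_eq_sqrt_real_inner, inner_sub_inner_smul_sub_inner_smul hu,
    real_inner_self_eq_norm_sq u, hu, real_inner_comm u v]
  ring_nf

theorem spherical_law_cos {u v w : V}
    (hu : ‖u‖ = 1) (hv : ‖v‖ = 1) (hw : ‖w‖ = 1) :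
    cos (angle v w) = cos (angle w u) * cos (angle u v) +
      sin (angle w u) * sin (angle u v) *
        cos (angle (v - inner ℝ v u • u) (w - inner ℝ w u • u)) := by
  have hp := norm_sub_inner_smul_eq_sin_angle_mul_norm hu v
  have hq := norm_sub_inner_smul_eq_sin_angle_mul_norm hu w
  rw [hv] at hp
  rw [hw, angle_comm] at hq
  have := cos_angle_mul_norm_mul_norm (v - inner ℝ v u • u) (w - inner ℝ w u • u)
  rw [inner_sub_inner_smul_sub_inner_smul hu, hp, hq] at this
  rw [← inner_eq_cos_angle_of_norm_eq_one hv hw, ← inner_eq_cos_angle_of_norm_eq_one hw hu,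
    ← inner_eq_cos_angle_of_norm_eq_one hu hv]
  linear_combination -this + inner ℝ w u * real_inner_comm u v

end InnerProductGeometry

theorem stmt_3_general (u v w : EuclideanSpace ℝ (Fin 3))
    (hu : ‖u‖ = 1) (hv : ‖v‖ = 1) (hw : ‖w‖ = 1) :
    Real.cos (InnerProductGeometry.angle v w) =
      Real.cos (InnerProductGeometry.angle w u) * Real.cos (InnerProductGeometry.angle u v) +
      Real.sin (InnerProductGeometry.angle w u) * Real.sin (InnerProductGeometry.angle u v) *
        Real.cos (InnerProductGeometry.angle
          (v - (inner ℝ v u : ℝ) • u) (w - (inner ℝ w u : ℝ) • u)) :=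
  spherical_law_cos hu hv hw

/-- the spherical law of cosines. If `u, v, w` are linearly independent
unit vectors in `ℝ³`, with spherical side lengths `a = angle(v,w)`, `b = angle(w,u)`,
`c = angle(u,v)` and spherical vertex angle at `u` given by
`α = angle(v − ⟨v,u⟩u, w − ⟨w,u⟩u)`, then `cos a = cos b · cos c + sin b · sin c · cos α`. -/
theorem stmt_3 (u v w : EuclideanSpace ℝ (Fin 3))
    (hu : ‖u‖ = 1) (hv : ‖v‖ = 1) (hw : ‖w‖ = 1)
    (hli : LinearIndependent ℝ ![u, v, w]) :
    Real.cos (InnerProductGeometry.angle v w) =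
      Real.cos (InnerProductGeometry.angle w u) * Real.cos (InnerProductGeometry.angle u v) +
      Real.sin (InnerProductGeometry.angle w u) * Real.sin (InnerProductGeometry.angle u v) *
        Real.cos (InnerProductGeometry.angle
          (v - (inner ℝ v u : ℝ) • u) (w - (inner ℝ w u : ℝ) • u)) :=
  stmt_3_general u v w hu hv hw
end

section
/- Let a, b, c, α, β, γ ∈ (0,π) satisfy the three equations cos b·cos c + sin b·sin c·cos α = cos a, cos c·cos a + sin c·sin a·cos β = cos b, and cos a·cos b + sin a·sin b·cos γ = cos c. Then there exist linearly independent unit vectors u, v, w in EuclideanSpace ℝ (Fin 3) such that angle(v,w) = a, angle(w,u) = b, angle(u,v) = c, and the spherical vertex angles satisfy angle(v − ⟨v,u⟩u, w − ⟨w,u⟩u) = α, angle(u − ⟨u,v⟩v, w − ⟨w,v⟩v) = β, angle(u − ⟨u,w⟩w, v − ⟨v,w⟩w) = γ; that is, there is a spherical triangle with edgelengths a, b, c and respectively opposite angles α, β, γ. -/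
open Real InnerProductGeometry

/-!
Take `u = e₀`, `v = (cos c, sin c, 0)` and `w = (cos b, sin b cos α, sin b sin α)`; the first
cosine law makes `⟪v, w⟫ = cos a`. For unit vectors, the projections of `v`, `w` onto `u^⊥` have
lengths `sin c`, `sin b` and inner product `⟪v, w⟫ - ⟪v, u⟫⟪w, u⟫`, so each cosine law pins down
the vertex angle opposite the corresponding side. The Gram determinant of `u, v, w` is
`(sin b sin c sin α)² ≠ 0`, which gives linear independence.
-/

section
variable {E : Type*} [NormedAddCommGroup E] [InnerProductSpace ℝ E]

lemma angle_eq_of_inner_eq_mul_cos {x y : E} {s t θ : ℝ} (hs : 0 < s) (ht : 0 < t)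
    (hθ : θ ∈ Set.Icc 0 π) (hx : ‖x‖ = s) (hy : ‖y‖ = t) (hxy : inner ℝ x y = s * t * cos θ) :
    angle x y = θ := by
  rw [angle, hx, hy, hxy, mul_div_cancel_left₀ _ (by positivity), arccos_cos hθ.1 hθ.2]

lemma angle_eq_of_norm_eq_one_of_inner_eq_cos {x y : E} {θ : ℝ} (hθ : θ ∈ Set.Icc 0 π)
    (hx : ‖x‖ = 1) (hy : ‖y‖ = 1) (hxy : inner ℝ x y = cos θ) : angle x y = θ :=
  angle_eq_of_inner_eq_mul_cos one_pos one_pos hθ hx hy (by rw [hxy, one_mul, one_mul])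

lemma inner_sub_inner_smul_of_norm_eq_one {u : E} (hu : ‖u‖ = 1) (v w : E) :
    inner ℝ (v - inner ℝ v u • u) (w - inner ℝ w u • u) =
      inner ℝ v w - inner ℝ v u * inner ℝ w u := by
  have huu : inner ℝ u u = (1 : ℝ) := by rw [real_inner_self_eq_norm_sq, hu, one_pow]
  simp only [inner_sub_left, inner_sub_right, real_inner_smul_left, real_inner_smul_right, huu,
    real_inner_comm u]
  ring

lemma norm_sub_inner_smul_of_inner_eq_cos {u v : E} {c : ℝ} (hu : ‖u‖ = 1) (hv : ‖v‖ = 1)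
    (hc : 0 ≤ sin c) (hvu : inner ℝ v u = cos c) : ‖v - inner ℝ v u • u‖ = sin c := by
  have hsq : ‖v - inner ℝ v u • u‖ ^ 2 = sin c ^ 2 := by
    rw [← real_inner_self_eq_norm_sq, inner_sub_inner_smul_of_norm_eq_one hu, hvu,
      real_inner_self_eq_norm_sq, hv]
    linear_combination -sin_sq_add_cos_sq c
  exact (sq_eq_sq₀ (norm_nonneg _) hc).1 hsq

lemma angle_sub_inner_smul_eq_of_inner_eq {u v w : E} {b c α : ℝ} (hu : ‖u‖ = 1) (hv : ‖v‖ = 1)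
    (hw : ‖w‖ = 1) (hb : 0 < sin b) (hc : 0 < sin c) (hα : α ∈ Set.Icc 0 π)
    (hvu : inner ℝ v u = cos c) (hwu : inner ℝ w u = cos b)
    (hvw : inner ℝ v w = cos b * cos c + sin b * sin c * cos α) :
    angle (v - inner ℝ v u • u) (w - inner ℝ w u • u) = α := by
  refine angle_eq_of_inner_eq_mul_cos hc hb hα
    (norm_sub_inner_smul_of_inner_eq_cos hu hv hc.le hvu)
    (norm_sub_inner_smul_of_inner_eq_cos hu hw hb.le hwu) ?_
  rw [inner_sub_inner_smul_of_norm_eq_one hu, hvw, hvu, hwu]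
  ring

lemma linearIndependent_of_inner_eq_cos {u v w : E} {b c α : ℝ} (hu : ‖u‖ = 1) (hv : ‖v‖ = 1)
    (hw : ‖w‖ = 1) (hb : sin b ≠ 0) (hc : sin c ≠ 0) (hα : sin α ≠ 0)
    (hvu : inner ℝ v u = cos c) (hwu : inner ℝ w u = cos b)
    (hvw : inner ℝ v w = cos b * cos c + sin b * sin c * cos α) :
    LinearIndependent ℝ ![u, v, w] := by
  apply Matrix.linearIndependent_of_det_gram_ne_zero (𝕜 := ℝ)
  have hdet : (Matrix.gram ℝ ![u, v, w]).det = (sin b * sin c * sin α) ^ 2 := by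
    simp only [Matrix.det_fin_three, Matrix.gram_apply]
    simp only [Matrix.cons_val_zero, Matrix.cons_val_one, Matrix.cons_val,
      inner_self_eq_norm_sq_to_K, ringHom_apply, hu, hv, hw, one_pow, mul_one, one_mul,
      real_inner_comm v w, ← real_inner_comm u, hvu, hwu, hvw]
    linear_combination -(1 - cos c ^ 2) * sin_sq_add_cos_sq b - sin b ^ 2 * sin_sq_add_cos_sq c -
      (sin b * sin c) ^ 2 * sin_sq_add_cos_sq α
  rw [hdet]
  positivity

end

lemma exists_unit_vectors_inner_eq (b c α : ℝ) :
    ∃ u v w : EuclideanSpace ℝ (Fin 3), ‖u‖ = 1 ∧ ‖v‖ = 1 ∧ ‖w‖ = 1 ∧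
      inner ℝ v u = cos c ∧ inner ℝ w u = cos b ∧
      inner ℝ v w = cos b * cos c + sin b * sin c * cos α := by
  refine ⟨!₂[1, 0, 0], !₂[cos c, sin c, 0], !₂[cos b, sin b * cos α, sin b * sin α],
    ?_, ?_, ?_, ?_, ?_, ?_⟩
  all_goals simp [EuclideanSpace.norm_eq, PiLp.inner_apply, Fin.sum_univ_three]
  · linear_combination sin_sq_add_cos_sq b + sin b ^ 2 * sin_sq_add_cos_sq α
  · ring

/-- if `a, b, c, α, β, γ ∈ (0,π)` satisfy the three spherical law of cosines
equations, then there is a spherical triangle (three linearly independent unit vectors in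
`ℝ³`) with edgelengths `a, b, c` and respectively opposite vertex angles `α, β, γ`. -/
theorem stmt_4 (a b c α β γ : ℝ)
    (ha : a ∈ Set.Ioo 0 π) (hb : b ∈ Set.Ioo 0 π) (hc : c ∈ Set.Ioo 0 π)
    (hα : α ∈ Set.Ioo 0 π) (hβ : β ∈ Set.Ioo 0 π) (hγ : γ ∈ Set.Ioo 0 π)
    (h1 : Real.cos b * Real.cos c + Real.sin b * Real.sin c * Real.cos α = Real.cos a)
    (h2 : Real.cos c * Real.cos a + Real.sin c * Real.sin a * Real.cos β = Real.cos b)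
    (h3 : Real.cos a * Real.cos b + Real.sin a * Real.sin b * Real.cos γ = Real.cos c) :
    ∃ u v w : EuclideanSpace ℝ (Fin 3),
      ‖u‖ = 1 ∧ ‖v‖ = 1 ∧ ‖w‖ = 1 ∧ LinearIndependent ℝ ![u, v, w] ∧
      InnerProductGeometry.angle v w = a ∧
      InnerProductGeometry.angle w u = b ∧
      InnerProductGeometry.angle u v = c ∧
      InnerProductGeometry.angle (v - (inner ℝ v u : ℝ) • u) (w - (inner ℝ w u : ℝ) • u) = α ∧
      InnerProductGeometry.angle (u - (inner ℝ u v : ℝ) • v) (w - (inner ℝ w v : ℝ) • v) = β ∧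
      InnerProductGeometry.angle (u - (inner ℝ u w : ℝ) • w) (v - (inner ℝ v w : ℝ) • w) = γ := by
  obtain ⟨u, v, w, hu, hv, hw, hvu, hwu, hvw⟩ := exists_unit_vectors_inner_eq b c α
  have hsin {x : ℝ} (hx : x ∈ Set.Ioo 0 π) : 0 < sin x := sin_pos_of_pos_of_lt_pi hx.1 hx.2
  have hvw' : inner ℝ v w = cos a := hvw.trans h1
  have hwv : inner ℝ w v = cos a := by rw [real_inner_comm, hvw']
  have huv : inner ℝ u v = cos c := by rw [real_inner_comm, hvu]
  have huw : inner ℝ u w = cos b := by rw [real_inner_comm, hwu]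
  refine ⟨u, v, w, hu, hv, hw, linearIndependent_of_inner_eq_cos hu hv hw (hsin hb).ne'
    (hsin hc).ne' (hsin hα).ne' hvu hwu hvw,
    angle_eq_of_norm_eq_one_of_inner_eq_cos (Set.Ioo_subset_Icc_self ha) hv hw hvw',
    angle_eq_of_norm_eq_one_of_inner_eq_cos (Set.Ioo_subset_Icc_self hb) hw hu hwu,
    angle_eq_of_norm_eq_one_of_inner_eq_cos (Set.Ioo_subset_Icc_self hc) hu hv huv, ?_, ?_, ?_⟩
  · exact angle_sub_inner_smul_eq_of_inner_eq hu hv hw (hsin hb) (hsin hc)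
      (Set.Ioo_subset_Icc_self hα) hvu hwu hvw
  · exact angle_sub_inner_smul_eq_of_inner_eq hv hu hw (hsin ha) (hsin hc)
      (Set.Ioo_subset_Icc_self hβ) huv hwv (by rw [huw, ← h2]; ring)
  · exact angle_sub_inner_smul_eq_of_inner_eq hw hu hv (hsin ha) (hsin hb)
      (Set.Ioo_subset_Icc_self hγ) huw hvw' (by rw [huv, ← h3])
end

section
/- Let n ≥ 1 and let x_1, …, x_n be distinct points on the unit circle S = {p ∈ ℝ² : ‖p‖ = 1}, listed in cyclic order, i.e. x_k = (cos θ_k, sin θ_k) with 0 ≤ θ_1 < θ_2 < ⋯ < θ_n < 2π; call x_i and x_j adjacent if |i − j| ≡ 1 (mod n) (for n = 1 there are no non-adjacent pairs, for n = 2 both points are adjacent). Then there is NO finite collection Γ of injective continuous paths γ : [0,1] → D̄ = {p ∈ ℝ² : ‖p‖ ≤ 1} satisfying all of: (1) each γ ∈ Γ has γ(0) and γ(1) among {x_1,…,x_n} with γ(0) ≠ γ(1), and γ(t) lies in the open disc {p : ‖p‖ < 1} for all t ∈ (0,1); (2) every marked point x_k is an endpoint of at least one path in Γ, and for every pair of distinct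 marked points there is at most one path in Γ whose endpoint set is that pair; (3) for any two distinct paths γ, γ' ∈ Γ, the images γ([0,1]) and γ'([0,1]) intersect only in common endpoints, i.e. γ([0,1]) ∩ γ'([0,1]) ⊆ {γ(0),γ(1)} ∩ {γ'(0),γ'(1)}; (4) no path in Γ has as endpoint set a pair of adjacent marked points. -/
open Real Set

/-- The point `(cos t, sin t)` on the unit circle in the euclidean plane. -/
noncomputable def circlePt (t : ℝ) : EuclideanSpace ℝ (Fin 2) :=
  (WithLp.equiv 2 (Fin 2 → ℝ)).symm ![Real.cos t, Real.sin t]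

/-- Two indices `k, l` of `n` cyclically ordered points are adjacent iff
`|k − l| ≡ 1 (mod n)`. -/
def CyclicAdj (n : ℕ) (k l : Fin n) : Prop :=
  (k.1 + 1) % n = l.1 ∨ (l.1 + 1) % n = k.1

/-!
Choose a path whose endpoints `x_k, x_l` (`k < l`) are closest in index. Non-adjacency puts
`x_{k+1}` strictly between them, and by minimality the path leaving `x_{k+1}` ends at some `x_m`
with `m < k` or `m > l`. The two paths then have interleaved endpoints on the circle, so they
cross: a winding argument for a continuous logarithm of `(s, t) ↦ α s - β t` on the square
`[0,1]²` rules out disjoint paths.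
-/

open Metric
open Complex (I exp)

theorem CyclicAdj.of_succ_eq {n : ℕ} {k l : Fin n} (h : k.1 + 1 = l.1) : CyclicAdj n k l :=
  .inl (by rw [Nat.mod_eq_of_lt (h ▸ l.2), h])

theorem SimpleGraph.exists_crossing_adj {n : ℕ} [Nonempty (Fin n)] (G : SimpleGraph (Fin n))
    (hcover : ∀ k, ∃ l, G.Adj k l) (hconsec : ∀ k l : Fin n, k.1 + 1 = l.1 → ¬ G.Adj k l) :
    ∃ a b c d : Fin n, a < b ∧ b < c ∧ c < d ∧ G.Adj a c ∧ G.Adj b d := by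
  classical
  have hex : ∃ g, ∃ k l : Fin n, k < l ∧ G.Adj k l ∧ l.1 - k.1 = g := by
    obtain ⟨k⟩ := ‹Nonempty (Fin n)›
    obtain ⟨l, hkl⟩ := hcover k
    rcases lt_or_gt_of_ne hkl.ne with h | h
    exacts [⟨_, k, l, h, hkl, rfl⟩, ⟨_, l, k, h, hkl.symm, rfl⟩]
  -- an edge `k < l` of minimal length `l - k`
  obtain ⟨k, l, hkl, hadj, hgap⟩ := Nat.find_spec hex
  have hmin : ∀ k' l' : Fin n, k' < l' → G.Adj k' l' → l.1 - k.1 ≤ l'.1 - k'.1 :=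
    fun k' l' h h' => hgap ▸ Nat.find_min' hex ⟨k', l', h, h', rfl⟩
  have hkl' : k.1 + 1 ≠ l.1 := fun h => hconsec k l h hadj
  rw [Fin.lt_def] at hkl
  set j : Fin n := ⟨k.1 + 1, by omega⟩
  obtain ⟨m, hjm⟩ := hcover j
  have hmk : m ≠ k := fun h => hconsec k j rfl (h ▸ hjm.symm)
  rcases lt_or_gt_of_ne hmk with hm | hm
  · exact ⟨m, k, j, l, hm, Fin.lt_def.2 (by simp [j]), Fin.lt_def.2 (by simp [j]; omega),
      hjm.symm, hadj⟩
  · have hjm' : j < m := lt_of_le_of_ne (Fin.le_def.2 (by simp [j]; omega)) hjm.ne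
    have hlm : l < m := by
      by_contra! hml
      have := hmin j m hjm' hjm
      simp only [Fin.lt_def, Fin.le_def, j] at hjm' hml this
      omega
    exact ⟨k, j, l, m, Fin.lt_def.2 (by simp [j]), Fin.lt_def.2 (by simp [j]; omega), hlm,
      hadj, hjm⟩

theorem exists_interleaved_of_forall_not_cyclicAdj {E : Type*} {n : ℕ} [Nonempty (Fin n)]
    {Γ : Set (ℝ → E)} {x : Fin n → E} (hx : Function.Injective x)
    (hends : ∀ γ ∈ Γ, ∃ k l, k ≠ l ∧ γ 0 = x k ∧ γ 1 = x l)
    (hcover : ∀ k, ∃ γ ∈ Γ, γ 0 = x k ∨ γ 1 = x k)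
    (hnonadj : ∀ γ ∈ Γ, ∀ k l, γ 0 = x k → γ 1 = x l → ¬ CyclicAdj n k l) :
    ∃ a b c d : Fin n, a < b ∧ b < c ∧ c < d ∧ ∃ γ ∈ Γ, ∃ γ' ∈ Γ,
      ({γ 0, γ 1} : Set E) = {x a, x c} ∧ ({γ' 0, γ' 1} : Set E) = {x b, x d} := by
  let G := SimpleGraph.fromRel fun k l => ∃ γ ∈ Γ, γ 0 = x k ∧ γ 1 = x l
  have hpair : ∀ {k l}, G.Adj k l → ∃ γ ∈ Γ, ({γ 0, γ 1} : Set E) = {x k, x l} := by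
    rintro k l ⟨-, ⟨γ, hγ, h0, h1⟩ | ⟨γ, hγ, h0, h1⟩⟩
    exacts [⟨γ, hγ, by rw [h0, h1]⟩, ⟨γ, hγ, by rw [h0, h1, pair_comm]⟩]
  have hGcover : ∀ k, ∃ l, G.Adj k l := by
    intro k
    obtain ⟨γ, hγ, hk⟩ := hcover k
    obtain ⟨k', l', hkl', h0, h1⟩ := hends γ hγ
    rcases hk with hk | hk
    · obtain rfl := hx (hk.symm.trans h0)
      exact ⟨l', hkl', .inl ⟨γ, hγ, h0, h1⟩⟩
    · obtain rfl := hx (hk.symm.trans h1)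
      exact ⟨k', hkl'.symm, .inr ⟨γ, hγ, h0, h1⟩⟩
  have hGconsec : ∀ k l : Fin n, k.1 + 1 = l.1 → ¬ G.Adj k l := by
    rintro k l hkl ⟨-, ⟨γ, hγ, h0, h1⟩ | ⟨γ, hγ, h0, h1⟩⟩
    · exact hnonadj γ hγ k l h0 h1 (.of_succ_eq hkl)
    · exact hnonadj γ hγ l k h0 h1 (CyclicAdj.of_succ_eq hkl).symm
  obtain ⟨a, b, c, d, hab, hbc, hcd, hac, hbd⟩ := G.exists_crossing_adj hGcover hGconsec
  obtain ⟨γ, hγ, hγ_ends⟩ := hpair hac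
  obtain ⟨γ', hγ', hγ'_ends⟩ := hpair hbd
  exact ⟨a, b, c, d, hab, hbc, hcd, γ, hγ, γ', hγ', hγ_ends, hγ'_ends⟩

theorem Complex.exists_continuous_exp_eq {A : Type*} [TopologicalSpace A] [SimplyConnectedSpace A]
    [LocallyPathConnectedSpace A] {f : A → ℂ} (hf : Continuous f) (hf₀ : ∀ a, f a ≠ 0) :
    ∃ L : A → ℂ, Continuous L ∧ ∀ a, exp (L a) = f a := by
  obtain ⟨a₀⟩ := (inferInstance : Nonempty A)
  obtain ⟨L, -, hL⟩ := (Complex.isCoveringMap_exp.existsUnique_continuousMap_lifts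
    ⟨fun a => (⟨f a, hf₀ a⟩ : {z : ℂ // z ≠ 0}), hf.subtype_mk _⟩ a₀ (Complex.log (f a₀))
    (Subtype.ext (Complex.exp_log (hf₀ a₀)))).exists
  exact ⟨L, L.continuous, fun a => congrArg Subtype.val (congrFun hL a)⟩

theorem Complex.re_mul_conj_lt_one {z w : ℂ} (hz : ‖z‖ ≤ 1) (hw : ‖w‖ ≤ 1) (hzw : z ≠ w) :
    (z * (starRingEnd ℂ) w).re < 1 := by
  have hpos : 0 < Complex.normSq (z - w) := Complex.normSq_pos.2 (sub_ne_zero.2 hzw)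
  rw [Complex.normSq_sub, Complex.normSq_eq_norm_sq, Complex.normSq_eq_norm_sq] at hpos
  nlinarith [norm_nonneg z, norm_nonneg w]

theorem Complex.exp_ofReal_add_pi_mul_I (x : ℝ) : exp ((x + π : ℝ) * I) = -exp (x * I) := by
  push_cast
  rw [add_mul, Complex.exp_add_pi_mul_I]

theorem Complex.cos_im_sub_pos_of_exp_eq {L z : ℂ} {φ : ℝ} (hz : ‖z‖ ≤ 1)
    (hzφ : z ≠ exp (φ * I)) (hL : exp L = exp (φ * I) - z) : 0 < Real.cos (L.im - φ) := by
  have hconj : exp (-(φ * I)) = (starRingEnd ℂ) (exp (φ * I)) := by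
    rw [← Complex.exp_conj]
    simp
  have hre : (exp L * exp (-(φ * I))).re = Real.exp L.re * Real.cos (L.im - φ) := by
    rw [← Complex.exp_add, Complex.exp_re]
    simp [sub_eq_add_neg]
  have hval : (exp L * exp (-(φ * I))).re = 1 - (z * (starRingEnd ℂ) (exp (φ * I))).re := by
    rw [hL, hconj, sub_mul, Complex.mul_conj, Complex.normSq_eq_norm_sq]
    simp
  have hlt := Complex.re_mul_conj_lt_one hz (by simp) hzφ
  exact pos_of_mul_pos_right (hre ▸ hval ▸ sub_pos.2 hlt) (Real.exp_pos _).le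

theorem Real.exists_int_abs_sub_lt_of_cos_pos {y : ℝ} (hy : 0 < cos y) :
    ∃ k : ℤ, |y - 2 * π * k| < π / 2 := by
  set k := round (y / (2 * π))
  have hk : y - 2 * π * k = 2 * π * (y / (2 * π) - k) := by
    field_simp
  have hle : |y - 2 * π * k| ≤ π := by
    rw [hk, abs_mul, abs_of_pos two_pi_pos]
    nlinarith [pi_pos, abs_sub_round (y / (2 * π))]
  refine ⟨k, ?_⟩
  by_contra! hge
  have hcos : cos (y - 2 * π * k) ≤ 0 := by
    rw [← Real.cos_abs]
    exact Real.cos_nonpos_of_pi_div_two_le_of_le hge (by linarith [pi_pos])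
  rw [show y - 2 * π * k = y + (-k : ℤ) * (2 * π) by push_cast; ring,
    Real.cos_add_int_mul_two_pi] at hcos
  linarith

theorem IsPreconnected.exists_int_abs_sub_lt_of_cos_pos {X : Type*} [TopologicalSpace X]
    {S : Set X} (hS : IsPreconnected S) {u : X → ℝ} (hu : ContinuousOn u S) {φ : ℝ}
    (hcos : ∀ x ∈ S, 0 < cos (u x - φ)) : ∃ k : ℤ, ∀ x ∈ S, |u x - φ - 2 * π * k| < π / 2 := by
  rcases S.eq_empty_or_nonempty with rfl | ⟨x₀, hx₀⟩
  · exact ⟨0, by simp⟩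
  obtain ⟨k, hk⟩ := Real.exists_int_abs_sub_lt_of_cos_pos (hcos x₀ hx₀)
  refine ⟨k, fun x hx => ?_⟩
  have hI := (hS.image u hu).Icc_subset (mem_image_of_mem u hx₀) (mem_image_of_mem u hx)
  have hI' := (hS.image u hu).Icc_subset (mem_image_of_mem u hx) (mem_image_of_mem u hx₀)
  -- the cosine vanishes at `φ + 2πk ± π/2`, so `u` cannot reach these values on `S`
  have hzero : ∀ y ∈ u '' S, cos (y - φ) ≠ 0 := by
    rintro _ ⟨x, hx, rfl⟩
    exact (hcos x hx).ne'
  rw [abs_lt] at hk ⊢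
  constructor
  · by_contra! h
    refine hzero (φ + 2 * π * k - π / 2) (hI' ⟨by linarith, by linarith⟩) ?_
    rw [show φ + 2 * π * k - π / 2 - φ = -(π / 2) + (k : ℤ) * (2 * π) by ring,
      Real.cos_add_int_mul_two_pi, Real.cos_neg, Real.cos_pi_div_two]
  · by_contra! h
    refine hzero (φ + 2 * π * k + π / 2) (hI ⟨by linarith, by linarith⟩) ?_
    rw [show φ + 2 * π * k + π / 2 - φ = π / 2 + (k : ℤ) * (2 * π) by ring,
      Real.cos_add_int_mul_two_pi, Real.cos_pi_div_two]

theorem IsPreconnected.exists_int_abs_im_sub_lt {X : Type*} [TopologicalSpace X] {S : Set X}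
    (hS : IsPreconnected S) {L : X → ℂ} (hL : ContinuousOn L S) {φ : ℝ}
    (hφ : ∀ p ∈ S, ∃ z, ‖z‖ ≤ 1 ∧ z ≠ exp (φ * I) ∧ exp (L p) = exp (φ * I) - z) :
    ∃ k : ℤ, ∀ p ∈ S, |(L p).im - φ - 2 * π * k| < π / 2 :=
  hS.exists_int_abs_sub_lt_of_cos_pos (Complex.continuous_im.comp_continuousOn hL) fun p hp =>
    let ⟨_, hz, hzφ, hLp⟩ := hφ p hp
    Complex.cos_im_sub_pos_of_exp_eq hz hzφ hLp

theorem Int.sub_eq_of_abs_sub_two_pi_mul_lt {x φ ψ : ℝ} {k l m : ℤ}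
    (hk : |x - φ - 2 * π * k| < π / 2) (hl : |x - ψ - 2 * π * l| < π / 2)
    (hm : |ψ - φ - 2 * π * m| < π) : k - l = m := by
  have hlt : |2 * π * ((k - l - m : ℤ) : ℝ)| < 2 * π := by
    push_cast
    rw [abs_lt] at hk hl hm ⊢
    constructor <;> linarith
  rw [abs_mul, abs_of_pos two_pi_pos, mul_lt_iff_lt_one_right two_pi_pos] at hlt
  have : |k - l - m| < 1 := by exact_mod_cast hlt
  rw [abs_lt] at this
  omega

/-- A continuous logarithm `L` of `α s - β t` on the square exists if the paths are disjoint. On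
each side of the square one of the two paths sits at its endpoint `exp (ψ * I)`, so `Im L` stays
within `π / 2` of `ψ` or `ψ + π` modulo `2π`; comparing the four sides at the corners gives
incompatible multiples of `2π`. -/
theorem Path.nonempty_range_inter_of_interleaved {A B C D : ℝ} (hAB : A < B) (hBC : B < C)
    (hCD : C < D) (hDA : D < A + 2 * π)
    (α : Path (exp (A * I)) (exp (C * I))) (β : Path (exp (B * I)) (exp (D * I)))
    (hα : range α ⊆ closedBall 0 1) (hβ : range β ⊆ closedBall 0 1) :
    (range α ∩ range β).Nonempty := by
  by_contra hdisj
  have hne : ∀ s t, α.extend s ≠ β.extend t := fun s t h =>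
    hdisj ⟨_, α.extend_range ▸ mem_range_self s, β.extend_range ▸ h ▸ mem_range_self t⟩
  have hαle : ∀ s, ‖α.extend s‖ ≤ 1 := fun s =>
    mem_closedBall_zero_iff.1 (hα (α.extend_range ▸ mem_range_self s))
  have hβle : ∀ t, ‖β.extend t‖ ≤ 1 := fun t =>
    mem_closedBall_zero_iff.1 (hβ (β.extend_range ▸ mem_range_self t))
  obtain ⟨L, hLc, hL⟩ := Complex.exists_continuous_exp_eq
    (f := fun p : ℝ × ℝ => α.extend p.1 - β.extend p.2) (by fun_prop)
    (fun p => sub_ne_zero.2 (hne _ _))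
  have hI : IsPreconnected (Icc (0 : ℝ) 1) := isPreconnected_Icc
  have h0 : IsPreconnected ({0} : Set ℝ) := isPreconnected_singleton
  have h1 : IsPreconnected ({1} : Set ℝ) := isPreconnected_singleton
  obtain ⟨ka, hka⟩ := (h0.prod hI).exists_int_abs_im_sub_lt hLc.continuousOn (φ := A)
    fun p hp => by
      rw [hL, mem_singleton_iff.1 hp.1, α.extend_zero]
      exact ⟨β.extend p.2, hβle _, fun h => hne 0 p.2 (by rw [α.extend_zero, h]), rfl⟩
  obtain ⟨kc, hkc⟩ := (h1.prod hI).exists_int_abs_im_sub_lt hLc.continuousOn (φ := C)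
    fun p hp => by
      rw [hL, mem_singleton_iff.1 hp.1, α.extend_one]
      exact ⟨β.extend p.2, hβle _, fun h => hne 1 p.2 (by rw [α.extend_one, h]), rfl⟩
  obtain ⟨kb, hkb⟩ := (hI.prod h0).exists_int_abs_im_sub_lt hLc.continuousOn (φ := B + π)
    fun p hp => by
      rw [hL, mem_singleton_iff.1 hp.2, β.extend_zero, Complex.exp_ofReal_add_pi_mul_I]
      refine ⟨-α.extend p.1, by simpa using hαle _, fun h => hne p.1 0 ?_, by ring⟩
      rw [β.extend_zero, ← neg_neg (α.extend p.1), h, neg_neg]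
  obtain ⟨kd, hkd⟩ := (hI.prod h1).exists_int_abs_im_sub_lt hLc.continuousOn (φ := D + π)
    fun p hp => by
      rw [hL, mem_singleton_iff.1 hp.2, β.extend_one, Complex.exp_ofReal_add_pi_mul_I]
      refine ⟨-α.extend p.1, by simpa using hαle _, fun h => hne p.1 1 ?_, by ring⟩
      rw [β.extend_one, ← neg_neg (α.extend p.1), h, neg_neg]
  have e00 := Int.sub_eq_of_abs_sub_two_pi_mul_lt (m := 1) (hka (0, 0) (by simp))
    (hkb (0, 0) (by simp)) (by push_cast; rw [abs_lt]; constructor <;> linarith)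
  have e10 := Int.sub_eq_of_abs_sub_two_pi_mul_lt (m := 0) (hkc (1, 0) (by simp))
    (hkb (1, 0) (by simp)) (by push_cast; rw [abs_lt]; constructor <;> linarith)
  have e11 := Int.sub_eq_of_abs_sub_two_pi_mul_lt (m := 1) (hkc (1, 1) (by simp))
    (hkd (1, 1) (by simp)) (by push_cast; rw [abs_lt]; constructor <;> linarith)
  have e01 := Int.sub_eq_of_abs_sub_two_pi_mul_lt (m := 1) (hka (0, 1) (by simp))
    (hkd (0, 1) (by simp)) (by push_cast; rw [abs_lt]; constructor <;> linarith)
  omega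

theorem exists_path_range_subset_image {X : Type*} [TopologicalSpace X] {f : ℝ → X}
    (hf : ContinuousOn f (Icc 0 1)) {x y : X} (hxy : ({f 0, f 1} : Set X) = {x, y}) :
    ∃ p : Path x y, range p ⊆ f '' Icc 0 1 := by
  rcases Set.pair_eq_pair_iff.1 hxy with ⟨h0, h1⟩ | ⟨h0, h1⟩
  · exact ⟨Path.ofLine hf h0 h1, range_subset_iff.2 (Path.ofLine_mem hf h0 h1)⟩
  · exact ⟨(Path.ofLine hf h0 h1).symm, by
      rw [Path.symm_range]
      exact range_subset_iff.2 (Path.ofLine_mem hf h0 h1)⟩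

theorem Complex.orthonormalBasisOneI_repr_symm_circlePt (t : ℝ) :
    Complex.orthonormalBasisOneI.repr.symm (circlePt t) = exp (t * I) := by
  simp [Complex.orthonormalBasisOneI_repr_symm_apply, circlePt, Complex.exp_mul_I]

theorem circlePt_injOn : InjOn circlePt (Ico 0 (2 * π)) := by
  intro s hs t ht h
  apply Circle.exp_injOn_Ico (by simp) hs ht
  apply Subtype.ext
  simp only [Circle.coe_exp]
  rw [← Complex.orthonormalBasisOneI_repr_symm_circlePt, h,
    Complex.orthonormalBasisOneI_repr_symm_circlePt]

theorem nonempty_image_inter_of_interleaved {A B C D : ℝ} (hAB : A < B) (hBC : B < C)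
    (hCD : C < D) (hDA : D < A + 2 * π) {γ γ' : ℝ → EuclideanSpace ℝ (Fin 2)}
    (hγ : ContinuousOn γ (Icc 0 1)) (hγ' : ContinuousOn γ' (Icc 0 1))
    (hγ_le : ∀ t ∈ Icc (0 : ℝ) 1, ‖γ t‖ ≤ 1) (hγ'_le : ∀ t ∈ Icc (0 : ℝ) 1, ‖γ' t‖ ≤ 1)
    (hγ_ends : ({γ 0, γ 1} : Set _) = {circlePt A, circlePt C})
    (hγ'_ends : ({γ' 0, γ' 1} : Set _) = {circlePt B, circlePt D}) :
    (γ '' Icc 0 1 ∩ γ' '' Icc 0 1).Nonempty := by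
  set e := Complex.orthonormalBasisOneI.repr.symm
  have he : ∀ t, e (circlePt t) = exp (t * I) := Complex.orthonormalBasisOneI_repr_symm_circlePt
  have toPath : ∀ {δ : ℝ → EuclideanSpace ℝ (Fin 2)} {x y : ℝ}, ContinuousOn δ (Icc 0 1) →
      (∀ t ∈ Icc (0 : ℝ) 1, ‖δ t‖ ≤ 1) → ({δ 0, δ 1} : Set _) = {circlePt x, circlePt y} →
      ∃ p : Path (exp (x * I)) (exp (y * I)), range p ⊆ closedBall 0 1 ∩ e '' (δ '' Icc 0 1) := by
    intro δ x y hδ hδ_le hδ_ends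
    obtain ⟨p, hp⟩ : ∃ p : Path (exp (x * I)) (exp (y * I)), range p ⊆ (e ∘ δ) '' Icc 0 1 :=
      exists_path_range_subset_image (e.continuous.comp_continuousOn hδ) (by
        rw [Function.comp_apply, Function.comp_apply, ← image_pair, hδ_ends, image_pair, he, he])
    refine ⟨p, fun z hz => ?_⟩
    obtain ⟨t, ht, rfl⟩ := hp hz
    exact ⟨by simpa using hδ_le t ht, image_comp e δ _ ▸ mem_image_of_mem _ ht⟩
  obtain ⟨p, hp⟩ := toPath hγ hγ_le hγ_ends
  obtain ⟨q, hq⟩ := toPath hγ' hγ'_le hγ'_ends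
  obtain ⟨z, hzp, hzq⟩ := Path.nonempty_range_inter_of_interleaved hAB hBC hCD hDA p q
    (fun z hz => (hp hz).1) (fun z hz => (hq hz).1)
  have hz : z ∈ e '' (γ '' Icc 0 1 ∩ γ' '' Icc 0 1) := by
    rw [image_inter e.injective]
    exact ⟨(hp hzp).2, (hq hzq).2⟩
  exact image_nonempty.1 ⟨z, hz⟩

/-- let `x_1, …, x_n` (n ≥ 1) be distinct points in cyclic order on the unit
circle, `x_k = (cos θ_k, sin θ_k)` with `0 ≤ θ_1 < ⋯ < θ_n < 2π`. There is no finite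
collection `Γ` of injective continuous paths in the closed unit disc such that:
(1) each path starts and ends at distinct marked points and otherwise stays in the open
disc; (2) every marked point is an endpoint of some path, and each pair of distinct marked
points is the endpoint set of at most one path; (3) distinct paths meet only in common
endpoints; (4) no path joins two adjacent marked points. -/
theorem stmt_10 (n : ℕ) (hn : 1 ≤ n) (θ : Fin n → ℝ) (hmono : StrictMono θ)
    (hlo : 0 ≤ θ ⟨0, hn⟩) (hhi : ∀ k, θ k < 2 * π) :
    ¬ ∃ Γ : Set (ℝ → EuclideanSpace ℝ (Fin 2)), Γ.Finite ∧
      (∀ γ ∈ Γ,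
        ContinuousOn γ (Icc 0 1) ∧
        InjOn γ (Icc 0 1) ∧
        (∀ t ∈ Icc (0 : ℝ) 1, ‖γ t‖ ≤ 1) ∧
        (∀ t ∈ Ioo (0 : ℝ) 1, ‖γ t‖ < 1) ∧
        (∃ k l : Fin n, k ≠ l ∧ γ 0 = circlePt (θ k) ∧ γ 1 = circlePt (θ l))) ∧
      (∀ k : Fin n, ∃ γ ∈ Γ, γ 0 = circlePt (θ k) ∨ γ 1 = circlePt (θ k)) ∧
      (∀ γ ∈ Γ, ∀ γ' ∈ Γ, γ ≠ γ' →
        ({γ 0, γ 1} : Set (EuclideanSpace ℝ (Fin 2))) ≠ {γ' 0, γ' 1}) ∧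
      (∀ γ ∈ Γ, ∀ γ' ∈ Γ, γ ≠ γ' →
        γ '' Icc 0 1 ∩ γ' '' Icc 0 1 ⊆
          ({γ 0, γ 1} ∩ {γ' 0, γ' 1} : Set (EuclideanSpace ℝ (Fin 2)))) ∧
      (∀ γ ∈ Γ, ∀ k l : Fin n, γ 0 = circlePt (θ k) → γ 1 = circlePt (θ l) →
        ¬ CyclicAdj n k l) := by
  rintro ⟨Γ, -, hpath, hcover, -, hmeet, hnonadj⟩
  have hθ : ∀ k, θ k ∈ Ico 0 (2 * π) := fun k =>
    ⟨hlo.trans (hmono.monotone (Fin.le_def.2 k.1.zero_le)), hhi k⟩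
  have hX : Function.Injective fun k => circlePt (θ k) := fun k l h =>
    hmono.injective (circlePt_injOn (hθ k) (hθ l) h)
  have : Nonempty (Fin n) := ⟨⟨0, hn⟩⟩
  obtain ⟨a, b, c, d, hab, hbc, hcd, γ, hγ, γ', hγ', hγ_ends, hγ'_ends⟩ :=
    exists_interleaved_of_forall_not_cyclicAdj hX (fun γ hγ => (hpath γ hγ).2.2.2.2) hcover hnonadj
  have hdisj : Disjoint ({circlePt (θ a), circlePt (θ c)} : Set _)
      {circlePt (θ b), circlePt (θ d)} := by
    simp [hX.eq_iff, hab.ne', hbc.ne, (hab.trans (hbc.trans hcd)).ne', hcd.ne']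
  have hne : γ ≠ γ' := by
    rintro rfl
    exact hdisj.ne_of_mem (mem_insert _ _) (hγ'_ends ▸ hγ_ends ▸ mem_insert _ _) rfl
  obtain ⟨z, hz⟩ := nonempty_image_inter_of_interleaved (hmono hab) (hmono hbc) (hmono hcd)
    (by linarith [(hθ a).1, (hθ d).2]) (hpath γ hγ).1 (hpath γ' hγ').1 (hpath γ hγ).2.2.1
    (hpath γ' hγ').2.2.1 hγ_ends hγ'_ends
  have hz' := hmeet γ hγ γ' hγ' hne hz
  rw [hγ_ends, hγ'_ends] at hz'
  exact hdisj.ne_of_mem hz'.1 hz'.2 rfl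
end
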